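/- Let X and Y be real vector spaces and let f : X → Y be an odd function (f(-x) = -f(x) for all x) satisfying the functional equation f(2x+y) + f(2x-y) = 4(f(x+y) + f(x-y)) - (3/7)(f(2y) - 2f(y)) + 2f(2x) - 8f(x) for all x, y in X. Then f is additive, i.e., f(x+y) = f(x) + f(y) for all x, y in X. -/

import Mathlib

/-- The mixed quartic-additive functional equation (1.4):
`f(2x+y) + f(2x-y) = 4(f(x+y) + f(x-y)) - (3/7)(f(2y) - 2f(y)) + 2f(2x) - 8f(x)`. -/
def MixedEq {X Y : Type*} [AddCommGroup X] [Module ℝ X] [AddCommGroup Y] [Module ℝ Y]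
    (f : X → Y) : Prop :=
  ∀ x y : X,
    f ((2 : ℝ) • x + y) + f ((2 : ℝ) • x - y) =
      (4 : ℝ) • (f (x + y) + f (x - y))
        - ((3 : ℝ) / 7) • (f ((2 : ℝ) • y) - (2 : ℝ) • f y)
        + (2 : ℝ) • f ((2 : ℝ) • x) - (8 : ℝ) • f x

/-- The quartic functional equation (1.3):
`f(2x+y) + f(2x-y) = 4(f(x+y) + f(x-y)) + 24 f(x) - 6 f(y)`. -/
def IsQuartic {X Y : Type*} [AddCommGroup X] [Module ℝ X] [AddCommGroup Y] [Module ℝ Y]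
    (f : X → Y) : Prop :=
  ∀ x y : X,
    f ((2 : ℝ) • x + y) + f ((2 : ℝ) • x - y) =
      (4 : ℝ) • (f (x + y) + f (x - y)) + (24 : ℝ) • f x - (6 : ℝ) • f y

/-!
An odd solution satisfies `f (2 • y) = 2 • f y` (put `x = 0`), so the equation collapses to
`f (2x+y) + f (2x-y) = 4 (f (x+y) + f (x-y)) - 4 f x`. Combining it with its instance at
`(y, 2x)` isolates `f (2x+y)`; evaluating that formula at `(x, -y)` and at `(y, 2x-y)`, whose
first argument `2y + (2x-y)` is again `2x+y`, yields the linear relation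
`f (x+y) + 3 f (x-y) = 4 f x - 2 f y`. Together with its instance at `-y` this forces
`f (x+y) = f x + f y`.
-/

namespace MixedEq

variable {X Y : Type*} [AddCommGroup X] [Module ℝ X] [AddCommGroup Y] [Module ℝ Y] {f : X → Y}

theorem map_two_smul (hodd : ∀ x, f (-x) = -f x) (hf : MixedEq f) (y : X) :
    f ((2 : ℝ) • y) = (2 : ℝ) • f y := by
  have h := hf 0 y
  have h0 := hodd 0
  simp only [smul_zero, zero_add, zero_sub, neg_zero, hodd] at h h0
  linear_combination (norm := module) (7 / 3 : ℝ) • h - (7 : ℝ) • h0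

theorem map_two_smul_add_add_map_two_smul_sub (hodd : ∀ x, f (-x) = -f x) (hf : MixedEq f)
    (x y : X) :
    f ((2 : ℝ) • x + y) + f ((2 : ℝ) • x - y) =
      (4 : ℝ) • (f (x + y) + f (x - y)) - (4 : ℝ) • f x := by
  have h := hf x y
  rw [hf.map_two_smul hodd y, hf.map_two_smul hodd x] at h
  linear_combination (norm := module) h

theorem eight_smul_map_two_smul_add (hodd : ∀ x, f (-x) = -f x) (hf : MixedEq f) (x y : X) :
    (8 : ℝ) • f ((2 : ℝ) • x + y) =
      (18 : ℝ) • f (x + y) + (14 : ℝ) • f (x - y) - (16 : ℝ) • f x + (4 : ℝ) • f y := by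
  have hxy := hf.map_two_smul_add_add_map_two_smul_sub hodd x y
  have hyx := hf.map_two_smul_add_add_map_two_smul_sub hodd y ((2 : ℝ) • x)
  rw [show (2 : ℝ) • y + (2 : ℝ) • x = (2 : ℝ) • (x + y) by module,
    show (2 : ℝ) • y - (2 : ℝ) • x = -((2 : ℝ) • (x - y)) by module,
    show y + (2 : ℝ) • x = (2 : ℝ) • x + y by module,
    show y - (2 : ℝ) • x = -((2 : ℝ) • x - y) by module] at hyx
  simp only [hodd, hf.map_two_smul hodd] at hyx
  linear_combination (norm := module) (4 : ℝ) • hxy - hyx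

theorem map_add_add_three_smul_map_sub (hodd : ∀ x, f (-x) = -f x) (hf : MixedEq f) (x y : X) :
    f (x + y) + (3 : ℝ) • f (x - y) = (4 : ℝ) • f x - (2 : ℝ) • f y := by
  have hxy := hf.eight_smul_map_two_smul_add hodd x y
  have hxy' := hf.eight_smul_map_two_smul_add hodd x (-y)
  have hyx := hf.eight_smul_map_two_smul_add hodd y ((2 : ℝ) • x - y)
  rw [show (2 : ℝ) • x + -y = (2 : ℝ) • x - y by module, ← sub_eq_add_neg, sub_neg_eq_add,
    hodd] at hxy'
  rw [show (2 : ℝ) • y + ((2 : ℝ) • x - y) = (2 : ℝ) • x + y by module,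
    show y + ((2 : ℝ) • x - y) = (2 : ℝ) • x by module,
    show y - ((2 : ℝ) • x - y) = -((2 : ℝ) • (x - y)) by module, hodd,
    hf.map_two_smul hodd, hf.map_two_smul hodd] at hyx
  linear_combination (norm := module)
    (-1 / 11 : ℝ) • hxy + (1 / 22 : ℝ) • hxy' + (1 / 11 : ℝ) • hyx

end MixedEq

theorem odd_solution_is_additive {X Y : Type*} [AddCommGroup X] [Module ℝ X]
    [AddCommGroup Y] [Module ℝ Y] (f : X → Y)
    (hodd : ∀ x : X, f (-x) = -f x) (hf : MixedEq f) :
    ∀ x y : X, f (x + y) = f x + f y := by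
  intro x y
  have hy := hf.map_add_add_three_smul_map_sub hodd x y
  have hy' := hf.map_add_add_three_smul_map_sub hodd x (-y)
  rw [← sub_eq_add_neg, sub_neg_eq_add, hodd] at hy'
  linear_combination (norm := module) (-1 / 8 : ℝ) • hy + (3 / 8 : ℝ) • hy'
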